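/- π = 1/(π³-1)^(1/3) - (π³-1)^(1/3)/π + (3(1 - π³ + π⁶)/(π²(π³-1)^(2/3)) + (1 + 3π³ - 6π⁶ + π⁹)/(π⁶ - π³))^(1/3). -/

import Mathlib

/-!
For any real `a` with `a ≠ 0` and `a³ ≠ 1`, put `c = ∛(a³ - 1)`. Using only `c³ = a³ - 1`, the
radicand under the outer cube root is exactly `(a - 1/c + c/a)³`, so the outer cube root returns
`a - 1/c + c/a` and the right-hand side collapses to `a`. Then take `a = π`.
-/

noncomputable def cbrt (x : ℝ) : ℝ := if x < 0 then -((-x) ^ ((1:ℝ)/3)) else x ^ ((1:ℝ)/3)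

lemma rpow_one_third_pow_three {x : ℝ} (hx : 0 ≤ x) : (x ^ ((1:ℝ)/3)) ^ 3 = x := by
  rw [← Real.rpow_natCast, ← Real.rpow_mul hx]
  norm_num

lemma cbrt_pow_three (x : ℝ) : cbrt x ^ 3 = x := by
  unfold cbrt
  split_ifs with hx
  · rw [neg_pow, rpow_one_third_pow_three (neg_nonneg.mpr hx.le)]
    ring
  · exact rpow_one_third_pow_three (not_lt.mp hx)

lemma cbrt_pow_three_self (u : ℝ) : cbrt (u ^ 3) = u :=
  (Odd.pow_injective (by decide : Odd 3)) (cbrt_pow_three (u ^ 3))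

lemma ramanujan_radicand_eq_cube {a c : ℝ} (ha : a ≠ 0) (ha3 : a ^ 3 ≠ 1) (hc : c ^ 3 = a ^ 3 - 1) :
    3 * (1 - a ^ 3 + a ^ 6) / (a ^ 2 * c ^ 2) +
      (1 + 3 * a ^ 3 - 6 * a ^ 6 + a ^ 9) / (a ^ 6 - a ^ 3) = (a - 1 / c + c / a) ^ 3 := by
  have hc0 : c ≠ 0 := by
    rintro rfl
    exact ha3 (by linear_combination -hc)
  have ha63 : a ^ 6 - a ^ 3 ≠ 0 := by
    rw [show a ^ 6 - a ^ 3 = a ^ 3 * (a ^ 3 - 1) by ring]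
    exact mul_ne_zero (pow_ne_zero 3 ha) (sub_ne_zero.mpr ha3)
  field_simp
  linear_combination (-(c ^ 3 * a ^ 3) + c ^ 3 - 3 * c ^ 2 * a ^ 5 + 3 * c ^ 2 * a ^ 2
      - 3 * c * a ^ 7 + 6 * c * a ^ 4 - 3 * c * a - a ^ 3) * hc

theorem ramanujan_cbrt_identity {a : ℝ} (ha : a ≠ 0) (ha3 : a ^ 3 ≠ 1) :
    a = 1 / cbrt (a ^ 3 - 1) - cbrt (a ^ 3 - 1) / a +
      cbrt (3 * (1 - a ^ 3 + a ^ 6) / (a ^ 2 * (cbrt (a ^ 3 - 1)) ^ 2) +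
        (1 + 3 * a ^ 3 - 6 * a ^ 6 + a ^ 9) / (a ^ 6 - a ^ 3)) := by
  rw [ramanujan_radicand_eq_cube ha ha3 (cbrt_pow_three _), cbrt_pow_three_self]
  ring

theorem pi_cube_root_identity :
    Real.pi = 1 / cbrt (Real.pi ^ 3 - 1) - cbrt (Real.pi ^ 3 - 1) / Real.pi +
      cbrt (3 * (1 - Real.pi ^ 3 + Real.pi ^ 6) / (Real.pi ^ 2 * (cbrt (Real.pi ^ 3 - 1)) ^ 2) +
        (1 + 3 * Real.pi ^ 3 - 6 * Real.pi ^ 6 + Real.pi ^ 9) / (Real.pi ^ 6 - Real.pi ^ 3)) := by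
  have hpi3 : 1 < Real.pi ^ 3 := one_lt_pow₀ (by linarith [Real.pi_gt_three]) three_ne_zero
  exact ramanujan_cbrt_identity Real.pi_ne_zero hpi3.ne'
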